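/- arXiv:1505.07577 — 2 statements merged into one kernel-verified Lean document; each statement's English description precedes it below -/
import Mathlib

section
/- If two functions f, g : ℕ → ℂ admit admissible expressions f(r) = (∑_i n_i α_i^r)/(q^{cr} − 1) and g(r) = (∑_j m_j β_j^r)/(q^{dr} − 1) with the same values for all r ∈ ℕ (f = g as functions), then their duals, obtained by replacing α_i^r with α_i^{−r} and q^{cr} with q^{−cr}, are also equal as functions of r. In particular the dual of an admissible function is well-defined. -/
/-!
Write `F(r) = ∑ n_i α_i^r` and `G(r) = ∑ m_j β_j^r`. Clearing denominators, `f = g` says that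
the exponential sum
`F(r) (q^{dr} - 1) - G(r) (q^{cr} - 1) = ∑ n_i (α_i q^d)^r - ∑ n_i α_i^r - ∑ m_j (β_j q^c)^r + ∑ m_j β_j^r`
vanishes for every `r > 0`. An exponential sum `∑ a_i v_i^s` that vanishes for all `s > 0` is
killed by every polynomial without constant term, and by Lagrange interpolation on
`{0} ∪ {v_i}` such a polynomial agrees with `x ↦ x^z` at every `v_i` whenever `z ≠ 0`.
So the identity persists at `-r`, and since `c, d ≠ 0` and `q > 1` the denominators
`q^{-cr} - 1`, `q^{-dr} - 1` do not vanish and can be divided out again.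
-/

open Finset Polynomial

section ExponentialSums

variable {ι K : Type*} [Fintype ι] [Field K]

theorem sum_mul_eval_eq_zero_of_sum_mul_pow_eq_zero (a v : ι → K)
    (h : ∀ s : ℕ, 0 < s → ∑ i, a i * v i ^ s = 0) {P : K[X]} (hP : P.coeff 0 = 0) :
    ∑ i, a i * P.eval (v i) = 0 := by
  calc ∑ i, a i * P.eval (v i)
      = ∑ s ∈ range (P.natDegree + 1), P.coeff s * ∑ i, a i * v i ^ s := by
        simp only [eval_eq_sum_range, mul_sum]
        rw [sum_comm]
        exact sum_congr rfl fun _ _ => sum_congr rfl fun _ _ => by ring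
    _ = 0 := sum_eq_zero fun s _ => by
        rcases Nat.eq_zero_or_pos s with rfl | hs
        · rw [hP, zero_mul]
        · rw [h s hs, mul_zero]

theorem sum_mul_eq_zero_of_sum_mul_pow_eq_zero (a v : ι → K)
    (h : ∀ s : ℕ, 0 < s → ∑ i, a i * v i ^ s = 0) {g : K → K} (hg : g 0 = 0) :
    ∑ i, a i * g (v i) = 0 := by
  classical
  set T : Finset K := insert 0 (univ.image v)
  set P : K[X] := Lagrange.interpolate T id g
  have hPT : ∀ x ∈ T, P.eval x = g x := fun x hx =>
    Lagrange.eval_interpolate_at_node g Function.injective_id.injOn hx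
  have hP0 : P.coeff 0 = 0 := by
    rw [coeff_zero_eq_eval_zero, hPT 0 (mem_insert_self _ _), hg]
  rw [← sum_mul_eval_eq_zero_of_sum_mul_pow_eq_zero a v h hP0]
  exact sum_congr rfl fun i _ => by
    rw [hPT _ (mem_insert_of_mem (mem_image_of_mem v (mem_univ i)))]

theorem sum_mul_zpow_eq_zero_of_sum_mul_pow_eq_zero (a v : ι → K)
    (h : ∀ s : ℕ, 0 < s → ∑ i, a i * v i ^ s = 0) {z : ℤ} (hz : z ≠ 0) :
    ∑ i, a i * v i ^ z = 0 :=
  sum_mul_eq_zero_of_sum_mul_pow_eq_zero a v h (g := (· ^ z)) (zero_zpow z hz)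

variable {κ : Type*} [Fintype κ]

theorem cross_mul_zpow_eq_of_forall_pos (n : ι → K) (m : κ → K) (α : ι → K) (β : κ → K)
    (A B : K)
    (h : ∀ s : ℕ, 0 < s → (∑ i, n i * α i ^ (s : ℤ)) * (B ^ (s : ℤ) - 1)
      = (∑ j, m j * β j ^ (s : ℤ)) * (A ^ (s : ℤ) - 1))
    {z : ℤ} (hz : z ≠ 0) :
    (∑ i, n i * α i ^ z) * (B ^ z - 1) = (∑ j, m j * β j ^ z) * (A ^ z - 1) := by
  let a : (ι ⊕ ι) ⊕ (κ ⊕ κ) → K :=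
    Sum.elim (Sum.elim n (-n)) (Sum.elim (-m) m)
  let v : (ι ⊕ ι) ⊕ (κ ⊕ κ) → K :=
    Sum.elim (Sum.elim (α * fun _ => B) α) (Sum.elim (β * fun _ => A) β)
  have hexpand : ∀ t : ℤ, ∑ k, a k * v k ^ t
      = (∑ i, n i * α i ^ t) * (B ^ t - 1) - (∑ j, m j * β j ^ t) * (A ^ t - 1) := by
    intro t
    simp only [a, v, Fintype.sum_sum_type, Sum.elim_inl, Sum.elim_inr, Pi.mul_apply,
      Pi.neg_apply, mul_zpow, neg_mul, sum_neg_distrib, mul_sub, sum_mul, mul_assoc, mul_one]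
    ring
  have hpos : ∀ s : ℕ, 0 < s → ∑ k, a k * v k ^ s = 0 := fun s hs => by
    have hs := h s hs
    rw [← sub_eq_zero, ← hexpand] at hs
    simpa only [zpow_natCast] using hs
  rw [← sub_eq_zero, ← hexpand]
  exact sum_mul_zpow_eq_zero_of_sum_mul_pow_eq_zero a v hpos hz

end ExponentialSums

section RealPowers

variable {q : ℝ}

theorem ofReal_rpow_mul_intCast (hq : 0 ≤ q) (e : ℝ) (z : ℤ) :
    ((q ^ (e * z) : ℝ) : ℂ) = ((q ^ e : ℝ) : ℂ) ^ z := by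
  rw [Real.rpow_mul hq, Real.rpow_intCast, Complex.ofReal_zpow]

theorem ofReal_rpow_zpow_ne_one (hq : 1 < q) {e : ℝ} (he : e ≠ 0) {z : ℤ} (hz : z ≠ 0) :
    ((q ^ e : ℝ) : ℂ) ^ z ≠ 1 := by
  have hq0 : 0 < q := zero_lt_one.trans hq
  have hqe : q ^ e ≠ 1 := by
    rw [Ne, ← Real.rpow_zero q, Real.rpow_right_inj hq0 hq.ne']
    exact he
  rw [← Complex.ofReal_zpow, Ne, Complex.ofReal_eq_one,
    zpow_eq_one_iff_right₀ (Real.rpow_nonneg hq0.le e) hqe]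
  exact hz

end RealPowers

theorem stmt_3_general (q : ℝ) (hq : 1 < q) (l l' : ℕ) (c d : ℚ) (hc : c ≠ 0) (hd : d ≠ 0)
    (n : Fin l → ℤ) (m : Fin l' → ℤ) (α : Fin l → ℂ) (β : Fin l' → ℂ)
    (h : ∀ r : ℕ, 0 < r →
      (∑ i, (n i : ℂ) * α i ^ (r : ℤ)) / (((q ^ ((c : ℝ) * r) : ℝ) : ℂ) - 1)
        = (∑ j, (m j : ℂ) * β j ^ (r : ℤ)) / (((q ^ ((d : ℝ) * r) : ℝ) : ℂ) - 1)) :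
    ∀ r : ℕ, 0 < r →
      (∑ i, (n i : ℂ) * α i ^ (-(r : ℤ))) / (((q ^ (-((c : ℝ) * r)) : ℝ) : ℂ) - 1)
        = (∑ j, (m j : ℂ) * β j ^ (-(r : ℤ))) / (((q ^ (-((d : ℝ) * r)) : ℝ) : ℂ) - 1) := by
  have hq0 : 0 ≤ q := zero_le_one.trans hq.le
  have hden : ∀ {e : ℚ}, e ≠ 0 → ∀ {z : ℤ}, z ≠ 0 → ((q ^ (e : ℝ) : ℝ) : ℂ) ^ z - 1 ≠ 0 :=
    fun he _ hz => sub_ne_zero.mpr (ofReal_rpow_zpow_ne_one hq (Rat.cast_ne_zero.mpr he) hz)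
  intro r hr
  have hr' : -(r : ℤ) ≠ 0 := by omega
  have hneg : ∀ e : ℝ, -(e * r) = e * ((-(r : ℤ) : ℤ) : ℝ) := fun e => by push_cast; ring
  rw [hneg, hneg, ofReal_rpow_mul_intCast hq0, ofReal_rpow_mul_intCast hq0,
    div_eq_div_iff (hden hc hr') (hden hd hr')]
  refine cross_mul_zpow_eq_of_forall_pos (fun i => (n i : ℂ)) (fun j => (m j : ℂ)) α β
    ((q ^ (c : ℝ) : ℝ) : ℂ) ((q ^ (d : ℝ) : ℝ) : ℂ) (fun s hs => ?_) hr'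
  have hs' : (s : ℤ) ≠ 0 := by omega
  rw [← div_eq_div_iff (hden hc hs') (hden hd hs')]
  simpa only [← ofReal_rpow_mul_intCast hq0, Int.cast_natCast] using h s hs

/-- Well-definedness of the dual of an admissible function: if two admissible
expressions `(∑ i, n i * α i ^ r) / (q ^ (c * r) - 1)` and
`(∑ j, m j * β j ^ r) / (q ^ (d * r) - 1)` define the same function of `r`, then the
dual expressions, obtained by replacing `α ^ r` by `α ^ (-r)` and `q ^ (c*r)` by
`q ^ (-(c*r))`, also define the same function of `r`. -/
theorem stmt_3 (q : ℝ) (hq : 1 < q) (l l' : ℕ) (c d : ℚ) (hc : c ≠ 0) (hd : d ≠ 0)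
    (n : Fin l → ℤ) (m : Fin l' → ℤ) (α : Fin l → ℂ) (β : Fin l' → ℂ)
    (hα : ∀ i, α i ≠ 0) (hβ : ∀ j, β j ≠ 0)
    (h : ∀ r : ℕ, 0 < r →
      (∑ i, (n i : ℂ) * α i ^ (r : ℤ)) / (((q ^ ((c : ℝ) * r) : ℝ) : ℂ) - 1)
        = (∑ j, (m j : ℂ) * β j ^ (r : ℤ)) / (((q ^ ((d : ℝ) * r) : ℝ) : ℂ) - 1)) :
    ∀ r : ℕ, 0 < r →
      (∑ i, (n i : ℂ) * α i ^ (-(r : ℤ))) / (((q ^ (-((c : ℝ) * r)) : ℝ) : ℂ) - 1)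
        = (∑ j, (m j : ℂ) * β j ^ (-(r : ℤ))) / (((q ^ (-((d : ℝ) * r)) : ℝ) : ℂ) - 1) :=
  stmt_3_general q hq l l' c d hc hd n m α β h
end

section
/- Let L/K be a ramified quadratic extension of K = 𝔽_q((t)) (q even) with unique K-involution ι, uniformizer ϖ, and suppose v_K(ι(ϖ) − ϖ) = i ≥ 1. For m ≥ 0, the tuning module Ξ = {(x,y) ∈ 𝒪_L² : x + t^m y = ι(x), y = ι(y)} is a free 𝒪_K-module of rank 2 with basis (1, 0) and (t^a ϖ, t^{a−m}(ι(ϖ)−ϖ)) where a = max(0, m−i), and 𝒪_L²/(𝒪_L·Ξ) ≅ 𝒪_L/(t^{a−m+i}). -/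
/-- The "tuning set" `Ξ = {(x, y) ∈ 𝒪_L² : x + t^m y = ι(x), y = ι(y)}` attached to a
quadratic extension `L/K` with involution `ι` and the representation
`τ_m = [[1, t^m], [0, 1]]`; here `tm` is the element `t^m` of `K`. -/
def tuningSet {K L : Type*} [Field K] [Field L] [Algebra K L]
    (OL : Subring L) (ι : L ≃ₐ[K] L) (tm : K) : Set (OL × OL) :=
  {p | (p.1 : L) + algebraMap K L tm * (p.2 : L) = ι (p.1 : L) ∧ (p.2 : L) = ι (p.2 : L)}

section auxTuning
variable {K L : Type*} [Field K] [Field L] [Algebra K L]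
variable {OK : Subring K} {OL : Subring L} {t : OK} {ϖ : OL} {f : OK →+* OL}

lemma aux_finj (hf : ∀ x : OK, algebraMap K L (x : K) = ((f x : OL) : L)) :
    Function.Injective f := by
  intro x y hxy
  have h1 : algebraMap K L (x : K) = algebraMap K L (y : K) := by
    rw [hf, hf, hxy]
  exact Subtype.coe_injective ((algebraMap K L).injective h1)

lemma aux_fι (hf : ∀ x : OK, algebraMap K L (x : K) = ((f x : OL) : L))
    (ι : L ≃ₐ[K] L) : ∀ x : OK, ι ((f x : OL) : L) = ((f x : OL) : L) := by
  intro x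
  rw [← hf, AlgEquiv.commutes]

lemma aux_ϖdvd (hϖnu : ¬ IsUnit ϖ)
    (hKdvr : ∀ x : OK, x ≠ 0 → ∃ (u : OKˣ) (k : ℕ), x = u * t ^ k) :
    ∀ α : OK, ϖ ∣ f α → t ∣ α := by
  intro α hdvd
  rcases eq_or_ne α 0 with rfl | hα
  · exact dvd_zero t
  obtain ⟨u, k, hu⟩ := hKdvr α hα
  rcases k with _ | k
  · exfalso
    apply hϖnu
    apply isUnit_of_dvd_unit hdvd
    have : IsUnit (α : OK) := by
      rw [hu, pow_zero, mul_one]; exact u.isUnit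
    exact this.map f
  · exact ⟨u * t ^ k, by rw [hu, pow_succ]; ring⟩

lemma aux_star2 (ht0 : t ≠ 0) (hϖ0 : ϖ ≠ 0) (hϖnu : ¬ IsUnit ϖ)
    (hKdvr : ∀ x : OK, x ≠ 0 → ∃ (u : OKˣ) (k : ℕ), x = u * t ^ k)
    (hf : ∀ x : OK, algebraMap K L (x : K) = ((f x : OL) : L))
    (hram : ∃ u : OLˣ, f t = u * ϖ ^ 2) :
    ∀ (n : ℕ) (α β : OK) (z : OL), f α + f β * ϖ = f (t ^ n) * z →
      t ^ n ∣ α ∧ t ^ n ∣ β := by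
  intro n
  induction n with
  | zero => intro α β z _; simp
  | succ n ih =>
    intro α β z h
    obtain ⟨u, hu⟩ := hram
    have ht' : f (t ^ (n + 1)) = f t * f (t ^ n) := by
      rw [← map_mul, ← pow_succ']
    have h1 : (f α : OL) = ϖ * ((u : OL) * ϖ * (f (t ^ n) * z) - f β) := by
      linear_combination h + z * ht' + (f (t ^ n) * z) * hu
    have hα : t ∣ α := aux_ϖdvd hϖnu hKdvr α ⟨_, h1⟩
    obtain ⟨α₁, hα₁⟩ := hα
    have hfα : f α = f t * f α₁ := by rw [hα₁, map_mul]
    have h2 : (f β : OL) = ϖ * ((u : OL) * (f (t ^ n) * z - f α₁)) := by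
      apply mul_right_cancel₀ hϖ0
      linear_combination h - hfα + z * ht' - (f α₁) * hu + z * f (t ^ n) * hu
    have hβ : t ∣ β := aux_ϖdvd hϖnu hKdvr β ⟨_, h2⟩
    obtain ⟨β₁, hβ₁⟩ := hβ
    have hfβ : f β = f t * f β₁ := by rw [hβ₁, map_mul]
    have hft0 : f t ≠ 0 := by
      intro h0
      exact ht0 (aux_finj hf (by rw [h0, map_zero]))
    have h4 : f α₁ + f β₁ * ϖ = f (t ^ n) * z := by
      apply mul_left_cancel₀ hft0
      linear_combination h - hfα - ϖ * hfβ + z * ht'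
    obtain ⟨d1, d2⟩ := ih α₁ β₁ z h4
    constructor
    · rw [hα₁, pow_succ']; exact mul_dvd_mul_left t d1
    · rw [hβ₁, pow_succ']; exact mul_dvd_mul_left t d2

lemma aux_kfrac (ht0 : t ≠ 0)
    (hKdvr : ∀ x : OK, x ≠ 0 → ∃ (u : OKˣ) (k : ℕ), x = u * t ^ k)
    (hKfrac : ∀ x : K, ∃ a b : OK, b ≠ 0 ∧ x = (a : K) / (b : K)) :
    ∀ c : K, ∃ (α : OK) (k : ℕ), c * (t : K) ^ k = (α : K) := by
  intro c
  obtain ⟨a, b, hb, hc⟩ := hKfrac c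
  obtain ⟨w, k, hw⟩ := hKdvr b hb
  refine ⟨a * (↑w⁻¹ : OK), k, ?_⟩
  have hw1 : ((w : OK) : K) * (((↑w⁻¹ : OK)) : K) = 1 := by
    have := w.mul_inv
    exact_mod_cast congrArg (Subtype.val) this
  have ht : ((t : K)) ^ k ≠ 0 := pow_ne_zero _ (by simpa using ht0)
  have hwK : ((w : OK) : K) ≠ 0 := by
    intro h0
    apply hb
    have hw0 : (w : OK) = 0 := Subtype.coe_injective h0
    simp [hw, hw0]
  have hbK : (b : K) = ((w : OK) : K) * (t : K) ^ k := by
    exact_mod_cast congrArg (Subtype.val) hw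
  rw [hc, hbK, Subring.coe_mul, div_mul_eq_mul_div, div_eq_iff (mul_ne_zero hwK ht)]
  linear_combination (-((a : K) * (t : K) ^ k)) * hw1

lemma aux_intcomp (ht0 : t ≠ 0)
    (hkfrac : ∀ c : K, ∃ (α : OK) (k : ℕ), c * (t : K) ^ k = (α : K))
    (hstar2 : ∀ (n : ℕ) (α β : OK) (z : OL), f α + f β * ϖ = f (t ^ n) * z →
      t ^ n ∣ α ∧ t ^ n ∣ β)
    (hf : ∀ x : OK, algebraMap K L (x : K) = ((f x : OL) : L)) :
    ∀ (a b : K) (z : OL), (z : L) = algebraMap K L a + algebraMap K L b * (ϖ : L) →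
      (∃ a0 : OK, a = (a0 : K)) ∧ (∃ b0 : OK, b = (b0 : K)) := by
  intro a b z hz
  obtain ⟨α, k, hk⟩ := hkfrac a
  obtain ⟨β, l, hl⟩ := hkfrac b
  have htK : ((t : OK) : K) ≠ 0 := by simpa using ht0
  have hZ : f (t ^ l * α) + f (t ^ k * β) * ϖ = f (t ^ (k + l)) * z := by
    apply Subtype.coe_injective
    push_cast
    rw [← hf, ← hf, ← hf, hz]
    push_cast
    rw [← hk, ← hl]
    simp only [map_mul, map_pow, map_add]
    ring
  obtain ⟨hd1, hd2⟩ := hstar2 (k + l) (t ^ l * α) (t ^ k * β) z hZ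
  constructor
  · obtain ⟨γ, hγ⟩ := hd1
    refine ⟨γ, ?_⟩
    have hα : α = t ^ k * γ := by
      apply mul_left_cancel₀ (pow_ne_zero l ht0)
      rw [show t ^ l * (t ^ k * γ) = t ^ (k + l) * γ by rw [pow_add]; ring, ← hγ]
    apply mul_right_cancel₀ (pow_ne_zero k htK)
    rw [hk, hα]
    push_cast
    ring
  · obtain ⟨γ, hγ⟩ := hd2
    refine ⟨γ, ?_⟩
    have hβ : β = t ^ l * γ := by
      apply mul_left_cancel₀ (pow_ne_zero k ht0)
      rw [show t ^ k * (t ^ l * γ) = t ^ (k + l) * γ by rw [pow_add]; ring, ← hγ]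
    apply mul_right_cancel₀ (pow_ne_zero l htK)
    rw [hl, hβ]
    push_cast
    ring

lemma aux_decomp (hdeg : Module.finrank K L = 2)
    (hϖnotK : ∀ c : K, algebraMap K L c ≠ (ϖ : L)) :
    ∀ x : L, ∃ a b : K, x = algebraMap K L a + algebraMap K L b * (ϖ : L) := by
  have hfd : FiniteDimensional K L := Module.finite_of_finrank_pos (by rw [hdeg]; norm_num)
  have hli : LinearIndependent K ![(1 : L), (ϖ : L)] := by
    rw [LinearIndependent.pair_iff]
    intro s r hsr
    by_cases hr : r = 0
    · subst hr
      simp only [zero_smul, add_zero] at hsr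
      refine ⟨?_, rfl⟩
      have h1 : algebraMap K L s = 0 := by simpa [Algebra.smul_def] using hsr
      simpa using h1
    · exfalso
      apply hϖnotK (-s / r)
      have h1 : algebraMap K L s + algebraMap K L r * ϖ = 0 := by
        have := hsr
        simp only [Algebra.smul_def, mul_one] at this
        exact this
      have hrL : algebraMap K L r ≠ 0 := by simpa using hr
      rw [map_div₀, map_neg, div_eq_iff hrL]
      linear_combination -h1
  have hspan := hli.span_eq_top_of_card_eq_finrank (by simp [hdeg])
  intro x
  have hx : x ∈ Submodule.span K (Set.range ![(1 : L), (ϖ : L)]) := by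
    rw [hspan]; trivial
  rw [show Set.range ![(1 : L), (ϖ : L)] = {(1 : L), (ϖ : L)} by
    simp only [Matrix.range_cons, Matrix.range_empty, Set.union_empty, Set.union_singleton]
    exact Set.pair_comm _ _] at hx
  obtain ⟨s, r, hsr⟩ := Submodule.mem_span_pair.mp hx
  exact ⟨s, r, by rw [← hsr]; simp [Algebra.smul_def]⟩

end auxTuning

set_option maxHeartbeats 1000000 in
/-- Let `K = 𝔽_q((t))` with `q` a power of `2` (abstracted as: a characteristic-two
local field `K` with ring of integers `OK`, uniformizer `t`, and residue field of
cardinality `q`), let `L/K` be a ramified quadratic extension with unique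
`K`-involution `ι`, ring of integers `OL`, and uniformizer `ϖ`, and suppose
`δ(ϖ) = ι(ϖ) - ϖ` lies in `𝒪_K` with valuation `v_K(δ(ϖ)) = i ≥ 1` (written as
`δ(ϖ) = du · t^i` with `du` a unit).  For `m ≥ 0` and `a = max(0, m - i)`, the tuning
module `Ξ = {(x,y) ∈ 𝒪_L² : x + t^m y = ι(x), y = ι(y)}` is a free `𝒪_K`-module of
rank `2` with basis `(1, 0)` and `(t^a ϖ, t^{a-m} δ(ϖ))`, and
`𝒪_L² / (𝒪_L · Ξ) ≅ 𝒪_L / (t^{a-m+i})`. -/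
theorem stmt_13
    (q : ℕ) (hq : ∃ s : ℕ, 1 ≤ s ∧ q = 2 ^ s)
    (K L : Type*) [Field K] [Field L] [Algebra K L]
    (hchar : (2 : K) = 0) (hdeg : Module.finrank K L = 2)
    (OK : Subring K) (OL : Subring L) (t : OK) (ϖ : OL)
    (ht0 : t ≠ 0) (hϖ0 : ϖ ≠ 0) (htnu : ¬ IsUnit t) (hϖnu : ¬ IsUnit ϖ)
    (hKdvr : ∀ x : OK, x ≠ 0 → ∃ (u : OKˣ) (k : ℕ), x = u * t ^ k)
    (hLdvr : ∀ x : OL, x ≠ 0 → ∃ (u : OLˣ) (k : ℕ), x = u * ϖ ^ k)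
    (hKfrac : ∀ x : K, ∃ a b : OK, b ≠ 0 ∧ x = (a : K) / (b : K))
    (hLfrac : ∀ x : L, ∃ a b : OL, b ≠ 0 ∧ x = (a : L) / (b : L))
    [Fintype (OK ⧸ Ideal.span ({t} : Set OK))]
    (hcard : Fintype.card (OK ⧸ Ideal.span ({t} : Set OK)) = q)
    (f : OK →+* OL) (hf : ∀ x : OK, algebraMap K L (x : K) = ((f x : OL) : L))
    (hram : ∃ u : OLˣ, f t = u * ϖ ^ 2)
    (ι : L ≃ₐ[K] L) (hι2 : ∀ x, ι (ι x) = x) (hιne : ∃ x, ι x ≠ x)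
    (hιO : ∀ x : OL, ι (x : L) ∈ OL)
    (i : ℕ) (hi : 1 ≤ i) (du : OK) (hdu : IsUnit du)
    (hδ : algebraMap K L ((du * t ^ i : OK) : K) = ι (ϖ : L) - (ϖ : L))
    (m : ℕ) :
    ((1, 0) : OL × OL) ∈ tuningSet OL ι ((t : K) ^ m) ∧
      (f (t ^ (m - i)) * ϖ, f (du * t ^ (m - i + i - m)))
        ∈ tuningSet OL ι ((t : K) ^ m) ∧
      (∀ p ∈ tuningSet OL ι ((t : K) ^ m),
        ∃! c : OK × OK,
          p = (f c.1 * 1 + f c.2 * (f (t ^ (m - i)) * ϖ),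
               f c.1 * 0 + f c.2 * f (du * t ^ (m - i + i - m)))) ∧
      Nonempty
        (((OL × OL) ⧸ Submodule.span OL (tuningSet OL ι ((t : K) ^ m))) ≃ₗ[OL]
          (OL ⧸ Ideal.span ({f (t ^ (m - i + i - m))} : Set OL))) := by
  have htK : ((t : OK) : K) ≠ 0 := by simpa using ht0
  have finj : Function.Injective f := aux_finj hf
  have hfι : ∀ x : OK, ι ((f x : OL) : L) = ((f x : OL) : L) := aux_fι hf ι
  have hdu0 : du ≠ 0 := hdu.ne_zero
  have hduti : (du * t ^ i : OK) ≠ 0 := mul_ne_zero hdu0 (pow_ne_zero _ ht0)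
  set D : L := algebraMap K L ((du * t ^ i : OK) : K) with hD
  have hD0 : D ≠ 0 := by
    rw [hD]
    simp only [ne_eq, map_eq_zero]
    exact_mod_cast hduti
  have hιϖ : ι ((ϖ : OL) : L) = ((ϖ : OL) : L) + D := by rw [hδ]; ring
  have hϖnotK : ∀ c : K, algebraMap K L c ≠ ((ϖ : OL) : L) := by
    intro c hc
    have h2 : ι (algebraMap K L c) = algebraMap K L c := AlgEquiv.commutes ι c
    rw [hc, hιϖ] at h2
    exact hD0 (by linear_combination h2)
  have hdecomp := aux_decomp hdeg hϖnotK
  have hintcomp := aux_intcomp ht0 (aux_kfrac ht0 hKdvr hKfrac)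
    (aux_star2 ht0 hϖ0 hϖnu hKdvr hf hram) hf
  have hme : m + (m - i + i - m) = (m - i) + i := by omega
  have hOK : t ^ m * (du * t ^ (m - i + i - m)) = t ^ (m - i) * (du * t ^ i) := by
    calc t ^ m * (du * t ^ (m - i + i - m)) = du * t ^ (m + (m - i + i - m)) := by ring
      _ = du * t ^ ((m - i) + i) := by rw [hme]
      _ = t ^ (m - i) * (du * t ^ i) := by ring
  have hg2eq : algebraMap K L ((t : K) ^ m) * ((f (du * t ^ (m - i + i - m)) : OL) : L)
      = ((f (t ^ (m - i)) : OL) : L) * D := by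
    calc algebraMap K L ((t : K) ^ m) * ((f (du * t ^ (m - i + i - m)) : OL) : L)
        = algebraMap K L (((t ^ m * (du * t ^ (m - i + i - m)) : OK) : K)) := by
          rw [← hf, ← map_mul]; norm_cast
      _ = algebraMap K L (((t ^ (m - i) * (du * t ^ i) : OK) : K)) := by rw [hOK]
      _ = ((f (t ^ (m - i)) : OL) : L) * D := by
          rw [hD, ← hf, ← map_mul]; norm_cast
  have mem1 : ((1, 0) : OL × OL) ∈ tuningSet OL ι ((t : K) ^ m) := by
    constructor
    · simp
    · simp
  have mem2 : ((f (t ^ (m - i)) * ϖ, f (du * t ^ (m - i + i - m))) : OL × OL)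
      ∈ tuningSet OL ι ((t : K) ^ m) := by
    constructor
    · show ((f (t ^ (m - i)) * ϖ : OL) : L)
        + algebraMap K L ((t : K) ^ m) * ((f (du * t ^ (m - i + i - m)) : OL) : L)
        = ι ((f (t ^ (m - i)) * ϖ : OL) : L)
      simp only [Subring.coe_mul]
      rw [map_mul ι, hfι, hιϖ, hg2eq]
      ring
    · exact (hfι _).symm
  have hmain : ∀ p ∈ tuningSet OL ι ((t : K) ^ m),
      ∃! c : OK × OK,
        p = (f c.1 * 1 + f c.2 * (f (t ^ (m - i)) * ϖ),
             f c.1 * 0 + f c.2 * f (du * t ^ (m - i + i - m))) := by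
    rintro ⟨x, y⟩ ⟨hx1, hx2⟩
    obtain ⟨ax, bx, hxd⟩ := hdecomp (x : L)
    obtain ⟨⟨a0, ha0⟩, ⟨b0, hb0⟩⟩ := hintcomp ax bx x hxd
    obtain ⟨ay, by', hyd⟩ := hdecomp (y : L)
    have hby0 : by' = 0 := by
      have h2 : ι (y : L) = (y : L) + algebraMap K L by' * D := by
        rw [hyd, map_add, map_mul, AlgEquiv.commutes, AlgEquiv.commutes, hιϖ]; ring
      rw [← hx2] at h2
      have h3 : algebraMap K L by' * D = 0 := by linear_combination -h2
      rcases mul_eq_zero.mp h3 with h | h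
      · simpa using h
      · exact absurd h hD0
    have hyd' : (y : L) = algebraMap K L ay := by rw [hyd, hby0]; simp
    obtain ⟨⟨c2', hc2'⟩, -⟩ := hintcomp ay 0 y (by rw [hyd']; simp)
    have hιx : ι (x : L) = (x : L) + algebraMap K L bx * D := by
      rw [hxd, map_add, map_mul, AlgEquiv.commutes, AlgEquiv.commutes, hιϖ]; ring
    have hKeq : (t : K) ^ m * ((c2' : OK) : K) = ((b0 : OK) : K) * ((du * t ^ i : OK) : K) := by
      have hc : algebraMap K L ((t : K) ^ m * ((c2' : OK) : K))
          = algebraMap K L (((b0 : OK) : K) * ((du * t ^ i : OK) : K)) := by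
        rw [map_mul, map_mul, ← hD]
        calc algebraMap K L ((t : K) ^ m) * algebraMap K L ((c2' : OK) : K)
            = algebraMap K L ((t : K) ^ m) * (y : L) := by rw [hyd', hc2']
          _ = ι (x : L) - (x : L) := by linear_combination hx1
          _ = algebraMap K L bx * D := by rw [hιx]; ring
          _ = algebraMap K L ((b0 : OK) : K) * D := by rw [← hb0]
      exact (algebraMap K L).injective hc
    have hEq1 : t ^ m * c2' = b0 * (du * t ^ i) := by exact_mod_cast hKeq
    obtain ⟨c2, key1, key2⟩ : ∃ c2 : OK,
        c2 * t ^ (m - i) = b0 ∧ c2 * (du * t ^ (m - i + i - m)) = c2' := by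
      obtain ⟨U, hU⟩ := hdu
      rcases le_or_gt i m with him | him
      · have hpow : t ^ (m - i) * t ^ i = t ^ m := by rw [← pow_add]; congr 1; omega
        have hcancel : t ^ (m - i) * c2' = b0 * du := by
          apply mul_right_cancel₀ (pow_ne_zero i ht0)
          linear_combination hEq1 + c2' * hpow
        have hU1 : (↑U⁻¹ : OK) * du = 1 := by rw [← hU]; exact U.inv_mul
        refine ⟨(↑U⁻¹ : OK) * c2', ?_, ?_⟩
        · linear_combination (↑U⁻¹ : OK) * hcancel + b0 * hU1
        · rw [show m - i + i - m = 0 by omega, pow_zero, mul_one]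
          linear_combination c2' * hU1
      · refine ⟨b0, ?_, ?_⟩
        · rw [show m - i = 0 by omega, pow_zero, mul_one]
        · rw [show m - i + i - m = i - m by omega]
          have hpow : t ^ m * t ^ (i - m) = t ^ i := by rw [← pow_add]; congr 1; omega
          apply mul_left_cancel₀ (pow_ne_zero m ht0)
          linear_combination b0 * du * hpow - hEq1
    have hrep : ((x, y) : OL × OL)
        = (f a0 * 1 + f c2 * (f (t ^ (m - i)) * ϖ),
           f a0 * 0 + f c2 * f (du * t ^ (m - i + i - m))) := by
      have h1 : x = f a0 * 1 + f c2 * (f (t ^ (m - i)) * ϖ) := by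
        apply Subtype.coe_injective
        push_cast
        simp only [← hf]
        rw [hxd, ha0, hb0]
        have hb0' : algebraMap K L (((b0 : OK)) : K)
            = algebraMap K L ((c2 : OK) : K) * algebraMap K L (((t ^ (m - i) : OK)) : K) := by
          rw [← map_mul]
          congr 1
          exact_mod_cast (congrArg Subtype.val key1).symm
        rw [hb0']
        ring
      have h2 : y = f a0 * 0 + f c2 * f (du * t ^ (m - i + i - m)) := by
        apply Subtype.coe_injective
        push_cast
        simp only [← hf]
        rw [hyd', hc2']
        have hc2'' : algebraMap K L (((c2' : OK)) : K)
            = algebraMap K L ((c2 : OK) : K)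
              * algebraMap K L (((du * t ^ (m - i + i - m) : OK)) : K) := by
          rw [← map_mul]
          congr 1
          exact_mod_cast (congrArg Subtype.val key2).symm
        rw [hc2'']
        ring
      rw [Prod.ext_iff]
      exact ⟨h1, h2⟩
    refine ⟨(a0, c2), hrep, ?_⟩
    rintro ⟨d1, d2⟩ hd
    have h2 := hrep.symm.trans hd
    rw [Prod.mk.injEq] at h2
    obtain ⟨hfst, hsnd⟩ := h2
    have hX0 : f (du * t ^ (m - i + i - m)) ≠ 0 := by
      intro h0
      have h00 : (du * t ^ (m - i + i - m) : OK) = 0 := finj (by rw [h0, map_zero])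
      exact (mul_ne_zero hdu0 (pow_ne_zero _ ht0)) h00
    have hd2 : d2 = c2 := by
      apply finj
      apply mul_right_cancel₀ hX0
      linear_combination -hsnd
    have hd1 : d1 = a0 := by
      apply finj
      rw [hd2] at hfst
      linear_combination -hfst
    rw [Prod.mk.injEq]
    exact ⟨hd1, hd2⟩
  refine ⟨mem1, mem2, hmain, ?_⟩
  set g1 : OL × OL := (1, 0) with hg1
  set g2 : OL × OL := (f (t ^ (m - i)) * ϖ, f (du * t ^ (m - i + i - m))) with hg2
  have hspan : Submodule.span OL (tuningSet OL ι ((t : K) ^ m))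
      = Submodule.span OL {g1, g2} := by
    apply le_antisymm
    · rw [Submodule.span_le]
      intro p hp
      obtain ⟨c, hc, -⟩ := hmain p hp
      have hpc : p = f c.1 • g1 + f c.2 • g2 := by
        rw [hc, Prod.ext_iff]
        refine ⟨?_, ?_⟩ <;>
          simp [hg1, hg2, Prod.fst_add, Prod.snd_add, Prod.smul_fst, Prod.smul_snd,
            smul_eq_mul]
      rw [hpc]
      exact Submodule.add_mem _
        (Submodule.smul_mem _ _ (Submodule.subset_span (by simp)))
        (Submodule.smul_mem _ _ (Submodule.subset_span (by simp)))
    · rw [Submodule.span_le]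
      rintro p hp
      simp only [Set.mem_insert_iff, Set.mem_singleton_iff] at hp
      rcases hp with rfl | rfl
      · exact Submodule.subset_span mem1
      · exact Submodule.subset_span mem2
  set I : Ideal OL := Ideal.span ({f (t ^ (m - i + i - m))} : Set OL) with hI
  let φ : (OL × OL) →ₗ[OL] OL ⧸ I := (Submodule.mkQ I).comp (LinearMap.snd OL OL OL)
  have hker : LinearMap.ker φ = Submodule.span OL {g1, g2} := by
    apply le_antisymm
    · rintro ⟨x, y⟩ hxy
      have h0 : Submodule.Quotient.mk y = (0 : OL ⧸ I) := LinearMap.mem_ker.mp hxy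
      have hy : y ∈ I := (Submodule.Quotient.mk_eq_zero I).mp h0
      obtain ⟨w, hw⟩ := Ideal.mem_span_singleton.mp hy
      obtain ⟨V, hVu⟩ := hdu.map f
      have hV1 : (↑V⁻¹ : OL) * f du = 1 := by rw [← hVu]; exact V.inv_mul
      rw [Submodule.mem_span_pair]
      refine ⟨x - ((↑V⁻¹ : OL) * w) * (f (t ^ (m - i)) * ϖ), (↑V⁻¹ : OL) * w, ?_⟩
      have hfdu : f (du * t ^ (m - i + i - m)) = f du * f (t ^ (m - i + i - m)) := map_mul f _ _
      rw [Prod.ext_iff]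
      constructor
      · show (x - ((↑V⁻¹ : OL) * w) * (f (t ^ (m - i)) * ϖ)) * (1 : OL)
          + ((↑V⁻¹ : OL) * w) * (f (t ^ (m - i)) * ϖ) = x
        ring
      · show (x - ((↑V⁻¹ : OL) * w) * (f (t ^ (m - i)) * ϖ)) * (0 : OL)
          + ((↑V⁻¹ : OL) * w) * f (du * t ^ (m - i + i - m)) = y
        rw [hfdu, hw]
        linear_combination f (t ^ (m - i + i - m)) * w * hV1
    · rw [Submodule.span_le]
      rintro p hp
      simp only [Set.mem_insert_iff, Set.mem_singleton_iff] at hp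
      rcases hp with rfl | rfl
      · show φ g1 = 0
        simp [φ, hg1]
      · show φ g2 = 0
        have hmem : f (du * t ^ (m - i + i - m)) ∈ I := by
          rw [hI]
          exact Ideal.mem_span_singleton.mpr ⟨f du, by rw [← map_mul, mul_comm]⟩
        have : φ g2 = Submodule.Quotient.mk (f (du * t ^ (m - i + i - m))) := rfl
        rw [this, Submodule.Quotient.mk_eq_zero]
        exact hmem
  have hsurj : Function.Surjective φ := by
    intro z
    obtain ⟨y, hy⟩ := Submodule.mkQ_surjective I z
    exact ⟨(0, y), hy⟩
  exact ⟨(Submodule.quotEquivOfEq _ _ (hspan.trans hker.symm)).trans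
    (φ.quotKerEquivOfSurjective hsurj)⟩
end
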